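/- The sequence (p_n) produced by the recursive grid algorithm converges uniformly on [0,1] to p*, the unique fixed point of T in the order interval [u0, v0]. -/

import Mathlib

open Set Filter

noncomputable def Tmap (c : ℝ → ℝ) (g : ℕ → ℝ) (δ : ℝ) (p : ℝ → ℝ) (s : ℝ) : ℝ :=
  sInf {y : ℝ | ∃ k : ℕ, ∃ t : ℝ, 1 ≤ k ∧ 0 ≤ t ∧ t ≤ s ∧
    y = c (s - t) + g k + δ * k * p (t / k)}

noncomputable def interp (h : ℝ) (v : ℕ → ℝ) (x : ℝ) : ℝ :=
  v ⌊x / h⌋₊ + (x / h - ⌊x / h⌋₊) * (v (⌊x / h⌋₊ + 1) - v ⌊x / h⌋₊)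

noncomputable def gridVal (c : ℝ → ℝ) (g : ℕ → ℝ) (δ h : ℝ) : ℕ → ℝ
  | 0 => 0
  | j + 1 =>
    sInf {y : ℝ | ∃ k : ℕ, ∃ t : ℝ, 1 ≤ k ∧ 0 ≤ t ∧ t ≤ j * h ∧
      y = c ((j + 1) * h - t) + g k +
        δ * k * interp h (fun i => gridVal c g δ h (min i j)) (t / k)}
  termination_by j => j
  decreasing_by exact Nat.lt_succ_of_le (Nat.min_le_right i j)

noncomputable def algP (c : ℝ → ℝ) (g : ℕ → ℝ) (δ : ℝ) (n : ℕ) : ℝ → ℝ :=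
  interp ((1 / 2 : ℝ) ^ n) (gridVal c g δ ((1 / 2 : ℝ) ^ n))

/-!
Write `φ y = c y - c'(0) y` for the gap between `c` and its tangent at `0`. Convexity and
`c 0 = 0` give `k φ(x) ≤ φ(k x)` for `k ≥ 1`, and differentiability at `0` gives `φ y = o(y)`.

Compare `p_n` and `p*` at a grid point `s` through a near-optimal split `(k, t)` of one of them,
reused as an (almost) admissible split for the other: the error at `s` is at most `δ k` times the
error near `t / k`, plus a slack of order `c h + ω_{p*}(h)`, and only `k ≤ K` matter because
`g → ∞`. Since `δ k p(t / k) ≤ p(s)`, induction on the number `m` of rounds bounds the error at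
value level `V` by `δ^m φ(V / (δ^m c'(0)))` plus `(2 δ K)^m` times the slack of one round; the
case `m = 0` is the sandwich `c'(0) s ≤ p ≤ c s` satisfied by both. The first term is uniformly
small for large `m` because `φ y = o(y)`, and for that fixed `m` the slack vanishes as `h → 0`.
Uniform continuity of `p*` carries the estimate from the grid to the interpolant.
-/

section Interpolation

variable {h x : ℝ} {v : ℕ → ℝ}

lemma interp_natCast_mul (hh : 0 < h) (v : ℕ → ℝ) (j : ℕ) : interp h v (j * h) = v j := by
  simp [interp, hh.ne']

lemma interp_neg (h : ℝ) (v : ℕ → ℝ) (x : ℝ) : interp h (-v) x = -interp h v x := by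
  simp only [interp, Pi.neg_apply]; ring

lemma interp_min_eq (hh : 0 < h) {j : ℕ} (hx : 0 ≤ x) (hxj : x ≤ j * h) :
    interp h (fun i => v (min i j)) x = interp h v x := by
  rcases hxj.eq_or_lt with rfl | hlt
  · rw [interp_natCast_mul hh, interp_natCast_mul hh, min_self]
  · have : ⌊x / h⌋₊ < j := (Nat.floor_lt (by positivity)).2 (by rwa [div_lt_iff₀ hh])
    simp only [interp, min_eq_left this.le, min_eq_left (Nat.succ_le_of_lt this)]

lemma exists_interp_eq_convexComb (hh : 0 < h) {N : ℕ} (hx : 0 ≤ x) (hxN : x ≤ (N + 1) * h) :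
    ∃ i ≤ N, ∃ θ ∈ Icc (0 : ℝ) 1,
      x = (i + θ) * h ∧ interp h v x = (1 - θ) * v i + θ * v (i + 1) := by
  by_cases hi : ⌊x / h⌋₊ ≤ N
  · refine ⟨_, hi, x / h - ⌊x / h⌋₊, ⟨?_, ?_⟩, by field_simp; ring, by simp only [interp]; ring⟩
    · linarith [Nat.floor_le (div_nonneg hx hh.le)]
    · linarith [Nat.lt_floor_add_one (x / h)]
  · have hN : ((N + 1 : ℕ) : ℝ) ≤ x / h := (Nat.le_floor_iff (by positivity)).1 (by omega)
    have hxe : x = (N + 1) * h := le_antisymm hxN (by push_cast at hN; rwa [le_div_iff₀ hh] at hN)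
    refine ⟨N, le_rfl, 1, ⟨zero_le_one, le_rfl⟩, by linarith, ?_⟩
    rw [hxe, ← interp_natCast_mul hh v (N + 1)]
    push_cast
    ring

lemma exists_le_interp (hh : 0 < h) {N : ℕ} (hx : 0 ≤ x) (hxN : x ≤ (N + 1) * h) :
    ∃ i ≤ N + 1, |x - i * h| ≤ h ∧ v i ≤ interp h v x := by
  obtain ⟨i, hi, θ, ⟨hθ0, hθ1⟩, hxe, he⟩ := exists_interp_eq_convexComb (v := v) hh hx hxN
  rcases le_total (v i) (v (i + 1)) with hv | hv
  · refine ⟨i, by omega, ?_, by rw [he]; nlinarith⟩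
    rw [hxe, abs_le]; constructor <;> nlinarith
  · refine ⟨i + 1, by omega, ?_, by rw [he]; nlinarith⟩
    rw [hxe, abs_le]; push_cast; constructor <;> nlinarith

lemma exists_interp_le (hh : 0 < h) {N : ℕ} (hx : 0 ≤ x) (hxN : x ≤ (N + 1) * h) :
    ∃ i ≤ N + 1, |x - i * h| ≤ h ∧ interp h v x ≤ v i := by
  obtain ⟨i, hi, hxi, hle⟩ := exists_le_interp (v := -v) hh hx hxN
  exact ⟨i, hi, hxi, by simpa [interp_neg] using hle⟩

lemma mul_le_interp (hh : 0 < h) {a : ℝ} {N : ℕ} (hv : ∀ i ≤ N, a * (i * h) ≤ v i)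
    (hx : 0 ≤ x) (hxN : x ≤ N * h) : a * x ≤ interp h v x := by
  cases N with
  | zero =>
    obtain rfl : x = 0 := by simp at hxN; linarith
    simpa [← interp_natCast_mul hh v 0] using hv 0 le_rfl
  | succ N =>
    obtain ⟨i, hi, θ, ⟨hθ0, hθ1⟩, hxe, he⟩ :=
      exists_interp_eq_convexComb (v := v) hh hx (by exact_mod_cast hxN)
    have h0 := hv i (by omega)
    have h1 := hv (i + 1) (by omega)
    push_cast at h1
    rw [he, hxe]
    nlinarith [mul_le_mul_of_nonneg_left h0 (sub_nonneg.2 hθ1), mul_le_mul_of_nonneg_left h1 hθ0]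

lemma abs_interp_sub_le (hh : 0 < h) {f : ℝ → ℝ} {N : ℕ} {ε ε' : ℝ} (hx : 0 ≤ x)
    (hxN : x ≤ (N + 1) * h) (hv : ∀ i ≤ N + 1, |v i - f (i * h)| ≤ ε)
    (hf : ∀ i ≤ N + 1, |x - i * h| ≤ h → |f x - f (i * h)| ≤ ε') :
    |interp h v x - f x| ≤ ε + ε' := by
  obtain ⟨i, hi, hxi, hle⟩ := exists_le_interp (v := v) hh hx hxN
  obtain ⟨i', hi', hxi', hle'⟩ := exists_interp_le (v := v) hh hx hxN
  have := abs_le.1 (hv i hi); have := abs_le.1 (hv i' hi')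
  have := abs_le.1 (hf i hi hxi); have := abs_le.1 (hf i' hi' hxi')
  rw [abs_le]; constructor <;> linarith

end Interpolation

section TangentGap

noncomputable def tangentGap (c : ℝ → ℝ) (y : ℝ) : ℝ := c y - deriv c 0 * y

variable {c : ℝ → ℝ}

lemma mul_le_of_convexOn_of_differentiableAt (hconv : ConvexOn ℝ (Icc 0 1) c) (hc0 : c 0 = 0)
    (hd : DifferentiableAt ℝ c 0) {y : ℝ} (hy : y ∈ Icc (0 : ℝ) 1) : deriv c 0 * y ≤ c y := by
  rcases hy.1.eq_or_lt with rfl | hy0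
  · simp [hc0]
  · have := hconv.deriv_le_slope ⟨le_rfl, zero_le_one⟩ hy hy0 hd
    rw [slope_def_field, hc0, sub_zero, sub_zero, le_div_iff₀ hy0] at this
    exact this

lemma tangentGap_nonneg (hconv : ConvexOn ℝ (Icc 0 1) c) (hc0 : c 0 = 0)
    (hd : DifferentiableAt ℝ c 0) {y : ℝ} (hy : y ∈ Icc (0 : ℝ) 1) : 0 ≤ tangentGap c y :=
  sub_nonneg.2 (mul_le_of_convexOn_of_differentiableAt hconv hc0 hd hy)

lemma tangentGap_mul_le (hconv : ConvexOn ℝ (Icc 0 1) c) (hc0 : c 0 = 0) {θ u : ℝ}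
    (hθ : θ ∈ Icc (0 : ℝ) 1) (hu : u ∈ Icc (0 : ℝ) 1) :
    tangentGap c (θ * u) ≤ θ * tangentGap c u := by
  have := hconv.2 ⟨le_rfl, zero_le_one⟩ hu (sub_nonneg.2 hθ.2) hθ.1 (by ring)
  simp only [smul_eq_mul, mul_zero, zero_add, hc0] at this
  simp only [tangentGap]
  nlinarith

lemma mul_tangentGap_le (hconv : ConvexOn ℝ (Icc 0 1) c) (hc0 : c 0 = 0)
    (hd : DifferentiableAt ℝ c 0) {k x u : ℝ} (hk : 1 ≤ k) (hx : 0 ≤ x) (hxu : k * x ≤ u)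
    (hu : u ≤ 1) : k * tangentGap c x ≤ tangentGap c u := by
  have hu0 : 0 ≤ u := by nlinarith
  rcases hu0.eq_or_lt with rfl | hu0
  · obtain rfl : x = 0 := by nlinarith
    simp [tangentGap, hc0]
  · have hθ : x / u * k ≤ 1 := by rw [div_mul_eq_mul_div, div_le_one hu0]; linarith
    have hle := tangentGap_mul_le hconv hc0 (θ := x / u)
      ⟨by positivity, by nlinarith [div_nonneg hx hu0.le]⟩ ⟨hu0.le, hu⟩
    rw [div_mul_cancel₀ _ hu0.ne'] at hle
    have hφ := tangentGap_nonneg hconv hc0 hd ⟨hu0.le, hu⟩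
    calc k * tangentGap c x ≤ x / u * k * tangentGap c u := by nlinarith
      _ ≤ tangentGap c u := mul_le_of_le_one_left hφ hθ

lemma monotoneOn_tangentGap (hconv : ConvexOn ℝ (Icc 0 1) c) (hc0 : c 0 = 0)
    (hd : DifferentiableAt ℝ c 0) : MonotoneOn (tangentGap c) (Icc 0 1) :=
  fun x hx _ hy hxy => by simpa using mul_tangentGap_le hconv hc0 hd le_rfl hx.1 (by simpa) hy.2

lemma exists_tangentGap_le_mul (hc0 : c 0 = 0) (hd : DifferentiableAt ℝ c 0) {ε : ℝ}
    (hε : 0 < ε) : ∃ y₀ > 0, ∀ y ∈ Icc 0 y₀, tangentGap c y ≤ ε * y := by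
  have := (hasDerivAt_iff_isLittleO.1 hd.hasDerivAt).def hε
  obtain ⟨r, hr, hball⟩ := Metric.eventually_nhds_iff.1 this
  refine ⟨r / 2, by positivity, fun y hy => ?_⟩
  have hyr : dist y 0 < r := by rw [Real.dist_eq, sub_zero, abs_of_nonneg hy.1]; linarith [hy.2]
  have := hball hyr
  simp only [hc0, sub_zero, smul_eq_mul, Real.norm_eq_abs, abs_of_nonneg hy.1] at this
  simp only [tangentGap]
  linarith [le_abs_self (c y - y * deriv c 0)]

lemma nonneg_of_convexOn_of_deriv_pos (hconv : ConvexOn ℝ (Icc 0 1) c) (hc0 : c 0 = 0)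
    (hc'0 : 0 < deriv c 0) : ∀ x ∈ Icc (0 : ℝ) 1, 0 ≤ c x := fun _ hx =>
  (mul_nonneg hc'0.le hx.1).trans (mul_le_of_convexOn_of_differentiableAt hconv hc0
    (differentiableAt_of_deriv_ne_zero hc'0.ne') hx)

lemma monotoneOn_of_convexOn_of_deriv_pos (hconv : ConvexOn ℝ (Icc 0 1) c) (hc0 : c 0 = 0)
    (hc'0 : 0 < deriv c 0) : MonotoneOn c (Icc 0 1) := fun x hx y hy hxy => by
  have := monotoneOn_tangentGap hconv hc0 (differentiableAt_of_deriv_ne_zero hc'0.ne') hx hy hxy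
  simp only [tangentGap] at this
  nlinarith

end TangentGap

section Envelope

variable {c : ℝ → ℝ} {δ : ℝ}

/-- Each round divides the argument of `φ` by `δ k ≥ δ` and multiplies the bound by `δ k`; the
cap at `1` keeps the argument inside the domain `[0, 1]` of `c`. -/
noncomputable def errEnvelope (c : ℝ → ℝ) (δ : ℝ) (m : ℕ) (V : ℝ) : ℝ :=
  δ ^ m * tangentGap c (min (V / (δ ^ m * deriv c 0)) 1)

lemma errEnvelope_nonneg (hconv : ConvexOn ℝ (Icc 0 1) c) (hc0 : c 0 = 0)
    (hc'0 : 0 < deriv c 0) (hδ : 0 < δ) (m : ℕ) {V : ℝ} (hV : 0 ≤ V) :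
    0 ≤ errEnvelope c δ m V :=
  mul_nonneg (by positivity) (tangentGap_nonneg hconv hc0 (differentiableAt_of_deriv_ne_zero
    hc'0.ne') ⟨le_min (by positivity) zero_le_one, min_le_right _ _⟩)

lemma errEnvelope_mono (hconv : ConvexOn ℝ (Icc 0 1) c) (hc0 : c 0 = 0)
    (hc'0 : 0 < deriv c 0) (hδ : 0 < δ) (m : ℕ) {V V' : ℝ} (hV : 0 ≤ V) (hVV' : V ≤ V') :
    errEnvelope c δ m V ≤ errEnvelope c δ m V' := by
  refine mul_le_mul_of_nonneg_left (monotoneOn_tangentGap hconv hc0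
    (differentiableAt_of_deriv_ne_zero hc'0.ne') ⟨le_min (by positivity) zero_le_one,
    min_le_right _ _⟩ ⟨le_min (div_nonneg (hV.trans hVV') (by positivity)) zero_le_one,
    min_le_right _ _⟩ ?_) (by positivity)
  gcongr

lemma tangentGap_le_errEnvelope (hconv : ConvexOn ℝ (Icc 0 1) c) (hc0 : c 0 = 0)
    (hc'0 : 0 < deriv c 0) (hδ : 1 ≤ δ) {m : ℕ} {s V : ℝ} (hs : 0 ≤ s)
    (hsV : s ≤ min (V / (δ ^ m * deriv c 0)) 1) : tangentGap c s ≤ errEnvelope c δ m V := by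
  have hd := differentiableAt_of_deriv_ne_zero hc'0.ne'
  have hmin : min (V / (δ ^ m * deriv c 0)) 1 ∈ Icc (0 : ℝ) 1 := ⟨hs.trans hsV, min_le_right _ _⟩
  calc tangentGap c s ≤ tangentGap c (min (V / (δ ^ m * deriv c 0)) 1) :=
        monotoneOn_tangentGap hconv hc0 hd ⟨hs, hsV.trans hmin.2⟩ hmin hsV
    _ ≤ errEnvelope c δ m V :=
        le_mul_of_one_le_left (tangentGap_nonneg hconv hc0 hd hmin) (one_le_pow₀ hδ)

lemma mul_errEnvelope_le_succ (hconv : ConvexOn ℝ (Icc 0 1) c) (hc0 : c 0 = 0)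
    (hc'0 : 0 < deriv c 0) (hδ : 0 < δ) {m : ℕ} {k U V : ℝ} (hk : 1 ≤ k) (hU : 0 ≤ U)
    (hUV : δ * k * U ≤ V) (hV : V ≤ δ ^ (m + 1) * deriv c 0) :
    δ * k * errEnvelope c δ m U ≤ errEnvelope c δ (m + 1) V := by
  have hd := differentiableAt_of_deriv_ne_zero hc'0.ne'
  have hu1 : V / (δ ^ (m + 1) * deriv c 0) ≤ 1 := (div_le_one (by positivity)).2 hV
  have hku : k * (U / (δ ^ m * deriv c 0)) ≤ V / (δ ^ (m + 1) * deriv c 0) := by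
    rw [pow_succ, ← mul_div_assoc, div_le_div_iff₀ (by positivity) (by positivity)]
    nlinarith [mul_le_mul_of_nonneg_right hUV (by positivity : 0 ≤ δ ^ m * deriv c 0)]
  have hut1 : U / (δ ^ m * deriv c 0) ≤ 1 := by
    nlinarith [div_nonneg hU (by positivity : 0 ≤ δ ^ m * deriv c 0)]
  have := mul_tangentGap_le hconv hc0 hd hk (by positivity) hku hu1
  simp only [errEnvelope, min_eq_left hu1, min_eq_left hut1]
  calc δ * k * (δ ^ m * tangentGap c (U / (δ ^ m * deriv c 0)))
      = δ ^ (m + 1) * (k * tangentGap c (U / (δ ^ m * deriv c 0))) := by ring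
    _ ≤ _ := mul_le_mul_of_nonneg_left this (by positivity)

lemma exists_errEnvelope_le (hc0 : c 0 = 0) (hc'0 : 0 < deriv c 0) (hδ : 1 < δ) {C ε : ℝ}
    (hC : 0 ≤ C) (hε : 0 < ε) :
    ∃ m : ℕ, ∀ V ∈ Icc 0 C, errEnvelope c δ m V ≤ ε := by
  obtain ⟨y₀, hy₀, hφ⟩ := exists_tangentGap_le_mul hc0 (differentiableAt_of_deriv_ne_zero
    hc'0.ne') (by positivity : 0 < ε * deriv c 0 / (C + 1))
  obtain ⟨m, hm⟩ := (tendsto_pow_atTop_atTop_of_one_lt hδ).eventually_ge_atTop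
    (C / (deriv c 0 * y₀)) |>.exists
  refine ⟨m, fun V hV => ?_⟩
  have hδm : 0 < δ ^ m := by positivity
  set u := V / (δ ^ m * deriv c 0)
  have hu0 : 0 ≤ u := div_nonneg hV.1 (by positivity)
  have huy : u ≤ y₀ := by
    rw [div_le_iff₀ (by positivity)] at hm ⊢
    nlinarith [hV.2]
  have hmin : min u 1 ≤ u := min_le_left _ _
  have := hφ (min u 1) ⟨le_min hu0 zero_le_one, hmin.trans huy⟩
  have hδu : δ ^ m * u = V / deriv c 0 := by simp only [u]; field_simp
  have hVC : V / deriv c 0 * (ε * deriv c 0 / (C + 1)) ≤ ε := by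
    rw [div_mul_div_comm, div_le_iff₀ (by positivity)]
    nlinarith [hV.1, hV.2, mul_le_mul_of_nonneg_left hV.2 (mul_nonneg hε.le hc'0.le)]
  calc errEnvelope c δ m V ≤ δ ^ m * (ε * deriv c 0 / (C + 1) * u) :=
        mul_le_mul_of_nonneg_left (this.trans (by gcongr)) hδm.le
    _ = V / deriv c 0 * (ε * deriv c 0 / (C + 1)) := by rw [← hδu]; ring
    _ ≤ ε := hVC

lemma sub_le_errEnvelope_succ (hconv : ConvexOn ℝ (Icc 0 1) c)
    (hc0 : c 0 = 0) (hc'0 : 0 < deriv c 0) (hδ : 1 ≤ δ) {m : ℕ} {k q s S' U V : ℝ}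
    (hk : 1 ≤ k) (hq : 0 ≤ q) (hS' : 0 ≤ S') (hkq : δ * k * q ≤ V + S')
    (hU : U - V ≤ δ * k * errEnvelope c δ m q + S') (hs : s ∈ Icc (0 : ℝ) 1)
    (hUs : U - V ≤ tangentGap c s) : U - V ≤ errEnvelope c δ (m + 1) (V + S') + S' := by
  by_cases hcap : V + S' ≤ δ ^ (m + 1) * deriv c 0
  · linarith [mul_errEnvelope_le_succ hconv hc0 hc'0 (by positivity) hk hq hkq hcap]
  · have hmin : min ((V + S') / (δ ^ (m + 1) * deriv c 0)) 1 = 1 :=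
      min_eq_right ((one_le_div (by positivity)).2 (le_of_not_ge hcap))
    linarith [tangentGap_le_errEnvelope hconv hc0 hc'0 hδ hs.1 (hmin ▸ hs.2)]

end Envelope

section Candidates

variable {c : ℝ → ℝ} {g : ℕ → ℝ} {δ : ℝ} {p : ℝ → ℝ} {s T : ℝ}

/-- `Tmap` minimises over `T = s`, the grid recursion over `T = s - h`. -/
def candidates (c : ℝ → ℝ) (g : ℕ → ℝ) (δ : ℝ) (p : ℝ → ℝ) (s T : ℝ) : Set ℝ :=
  {y | ∃ k : ℕ, ∃ t : ℝ, 1 ≤ k ∧ 0 ≤ t ∧ t ≤ T ∧ y = c (s - t) + g k + δ * k * p (t / k)}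

lemma Tmap_eq_sInf_candidates : Tmap c g δ p s = sInf (candidates c g δ p s s) := rfl

lemma mem_candidates {k : ℕ} {t : ℝ} (hk : 1 ≤ k) (ht : 0 ≤ t) (htT : t ≤ T) :
    c (s - t) + g k + δ * k * p (t / k) ∈ candidates c g δ p s T :=
  ⟨k, t, hk, ht, htT, rfl⟩

lemma mul_le_of_mem_candidates {a y : ℝ} (ha : 0 ≤ a) (hδ : 1 ≤ δ)
    (hg : ∀ k, 1 ≤ k → 0 ≤ g k) (hc : ∀ x ∈ Icc 0 s, a * x ≤ c x)
    (hp : ∀ x ∈ Icc 0 T, a * x ≤ p x) (hTs : T ≤ s) (hy : y ∈ candidates c g δ p s T) :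
    a * s ≤ y := by
  obtain ⟨k, t, hk, ht, htT, rfl⟩ := hy
  have hk1 : (1 : ℝ) ≤ k := by exact_mod_cast hk
  have htk : t / k ≤ t := div_le_self ht hk1
  have h1 := hc (s - t) ⟨by linarith, by linarith⟩
  have h2 := mul_le_mul_of_nonneg_left (hp (t / k) ⟨by positivity, by linarith⟩)
    (by positivity : 0 ≤ δ * k)
  have h3 : δ * k * (a * (t / k)) = δ * (a * t) := by field_simp
  nlinarith [hg k hk, mul_nonneg ha ht]

lemma bddBelow_candidates (hδ : 1 ≤ δ) (hg : ∀ k, 1 ≤ k → 0 ≤ g k)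
    (hc : ∀ x ∈ Icc 0 s, 0 ≤ c x) (hp : ∀ x ∈ Icc 0 T, 0 ≤ p x) (hTs : T ≤ s) :
    BddBelow (candidates c g δ p s T) :=
  ⟨0 * s, fun _ hy => mul_le_of_mem_candidates le_rfl hδ hg (by simpa using hc)
    (by simpa using hp) hTs hy⟩

lemma exists_mem_candidates_lt {V ν B : ℝ} {K₀ : ℕ} (hT : 0 ≤ T) (hTs : T ≤ s) (hδ : 0 ≤ δ)
    (hc : ∀ x ∈ Icc 0 s, 0 ≤ c x) (hp : ∀ x ∈ Icc 0 T, 0 ≤ p x)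
    (hK₀ : ∀ k, g k < B → k ≤ K₀) (hV : sInf (candidates c g δ p s T) ≤ V) (hν : 0 < ν)
    (hVB : V + ν ≤ B) :
    ∃ k : ℕ, ∃ t : ℝ, 1 ≤ k ∧ (k : ℝ) ≤ K₀ ∧ 0 ≤ t ∧ t ≤ T ∧
      c (s - t) + g k + δ * k * p (t / k) < V + ν := by
  obtain ⟨_, ⟨k, t, hk, ht, htT, rfl⟩, hlt⟩ :=
    exists_lt_of_csInf_lt ⟨_, mem_candidates le_rfl le_rfl hT⟩ (by linarith : _ < V + ν)
  have hk1 : (1 : ℝ) ≤ k := by exact_mod_cast hk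
  refine ⟨k, t, hk, Nat.cast_le.2 (hK₀ k ?_), ht, htT, hlt⟩
  linarith [hc (s - t) ⟨by linarith, by linarith⟩, mul_nonneg (by positivity : 0 ≤ δ * k)
    (hp (t / k) ⟨by positivity, (div_le_self ht hk1).trans htT⟩)]

lemma le_of_Tmap_eq (hδ : 1 ≤ δ) (hg : ∀ k, 1 ≤ k → 0 ≤ g k) (hc : ∀ x ∈ Icc 0 1, 0 ≤ c x)
    (hp : ∀ x ∈ Icc 0 1, 0 ≤ p x) (hs : s ∈ Icc (0 : ℝ) 1) (hfix : Tmap c g δ p s = p s)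
    {k : ℕ} {t : ℝ} (hk : 1 ≤ k) (ht : 0 ≤ t) (hts : t ≤ s) :
    p s ≤ c (s - t) + g k + δ * k * p (t / k) := by
  rw [← hfix, Tmap_eq_sInf_candidates]
  exact csInf_le (bddBelow_candidates hδ hg (fun x hx => hc x ⟨hx.1, hx.2.trans hs.2⟩)
    (fun x hx => hp x ⟨hx.1, hx.2.trans hs.2⟩) le_rfl) (mem_candidates hk ht hts)

end Candidates

section Grid

variable {c : ℝ → ℝ} {g : ℕ → ℝ} {δ h : ℝ}

lemma gridVal_zero : gridVal c g δ h 0 = 0 := by rw [gridVal]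

lemma gridVal_succ (hh : 0 < h) (j : ℕ) :
    gridVal c g δ h (j + 1) =
      sInf (candidates c g δ (interp h (gridVal c g δ h)) ((j + 1) * h) (j * h)) := by
  rw [gridVal]
  congr 1
  ext y
  constructor <;> rintro ⟨k, t, hk, ht, htj, rfl⟩ <;> refine ⟨k, t, hk, ht, htj, ?_⟩ <;>
    rw [interp_min_eq hh (by positivity) ((div_le_self ht (by exact_mod_cast hk)).trans htj)]

lemma mul_le_gridVal (hh : 0 < h) {a : ℝ} (ha : 0 ≤ a) (hδ : 1 ≤ δ)
    (hg : ∀ k, 1 ≤ k → 0 ≤ g k) (hc : ∀ x ∈ Icc 0 1, a * x ≤ c x) (j : ℕ) (hj : j * h ≤ 1) :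
    a * (j * h) ≤ gridVal c g δ h j := by
  induction j using Nat.strong_induction_on with
  | _ j IH =>
    cases j with
    | zero => simp [gridVal_zero]
    | succ j =>
      push_cast at hj ⊢
      rw [gridVal_succ hh]
      refine le_csInf ⟨_, mem_candidates le_rfl le_rfl (by positivity)⟩ fun y hy =>
        mul_le_of_mem_candidates ha hδ hg (fun x hx => hc x ⟨hx.1, hx.2.trans hj⟩)
          (fun x hx => mul_le_interp hh (fun i hi => IH i (by omega)
            ((mul_le_mul_of_nonneg_right (show (i : ℝ) ≤ j + 1 by norm_cast; omega)
              hh.le).trans hj))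
            hx.1 hx.2) (by linarith) hy

lemma mul_le_interp_gridVal (hh : 0 < h) {a : ℝ} (ha : 0 ≤ a) (hδ : 1 ≤ δ)
    (hg : ∀ k, 1 ≤ k → 0 ≤ g k) (hc : ∀ x ∈ Icc 0 1, a * x ≤ c x) {J : ℕ} (hJ : J * h ≤ 1)
    {x : ℝ} (hx : 0 ≤ x) (hxJ : x ≤ J * h) : a * x ≤ interp h (gridVal c g δ h) x :=
  mul_le_interp hh (fun i hi => mul_le_gridVal hh ha hδ hg hc i
    ((mul_le_mul_of_nonneg_right (by exact_mod_cast hi) hh.le).trans hJ)) hx hxJ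

lemma gridVal_nonneg (hh : 0 < h) (hδ : 1 ≤ δ) (hg : ∀ k, 1 ≤ k → 0 ≤ g k)
    (hc : ∀ x ∈ Icc (0 : ℝ) 1, 0 ≤ c x) (j : ℕ) (hj : j * h ≤ 1) : 0 ≤ gridVal c g δ h j := by
  simpa using mul_le_gridVal hh le_rfl hδ hg (by simpa using hc) j hj

lemma interp_gridVal_nonneg (hh : 0 < h) (hδ : 1 ≤ δ) (hg : ∀ k, 1 ≤ k → 0 ≤ g k)
    (hc : ∀ x ∈ Icc (0 : ℝ) 1, 0 ≤ c x) {J : ℕ} (hJ : J * h ≤ 1) {x : ℝ} (hx : 0 ≤ x)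
    (hxJ : x ≤ J * h) : 0 ≤ interp h (gridVal c g δ h) x := by
  simpa using mul_le_interp_gridVal hh le_rfl hδ hg (by simpa using hc) hJ hx hxJ

lemma gridVal_succ_le (hh : 0 < h) (hδ : 1 ≤ δ) (hg : ∀ k, 1 ≤ k → 0 ≤ g k)
    (hc : ∀ x ∈ Icc 0 1, 0 ≤ c x) {j k : ℕ} {t : ℝ} (hj : (j + 1) * h ≤ 1) (hk : 1 ≤ k)
    (ht : 0 ≤ t) (htj : t ≤ j * h) :
    gridVal c g δ h (j + 1) ≤
      c ((j + 1) * h - t) + g k + δ * k * interp h (gridVal c g δ h) (t / k) := by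
  rw [gridVal_succ hh]
  exact csInf_le (bddBelow_candidates hδ hg (fun x hx => hc x ⟨hx.1, hx.2.trans hj⟩)
    (fun x hx => interp_gridVal_nonneg hh hδ hg hc (by linarith) hx.1 hx.2) (by linarith))
    (mem_candidates hk ht htj)

lemma gridVal_le (hh : 0 < h) (hδ : 1 ≤ δ) (hg : ∀ k, 1 ≤ k → 0 ≤ g k) (hg1 : g 1 = 0)
    (hc : ∀ x ∈ Icc 0 1, 0 ≤ c x) (j : ℕ) (hj : j * h ≤ 1) :
    gridVal c g δ h j ≤ c (j * h) := by
  cases j with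
  | zero => simpa [gridVal_zero] using hc 0 ⟨le_rfl, zero_le_one⟩
  | succ j =>
    push_cast at hj ⊢
    simpa [hg1, interp, gridVal_zero] using
      gridVal_succ_le (δ := δ) hh hδ hg hc hj le_rfl le_rfl (by positivity)

end Grid

section ErrorBounds

variable {c : ℝ → ℝ} {g : ℕ → ℝ} {δ h : ℝ} {p : ℝ → ℝ}

lemma pstar_nonneg (hc'0 : 0 < deriv c 0)
    (hp_mem : ∀ s ∈ Icc (0 : ℝ) 1, deriv c 0 * s ≤ p s ∧ p s ≤ c s) :
    ∀ x ∈ Icc (0 : ℝ) 1, 0 ≤ p x := fun x hx =>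
  (mul_nonneg hc'0.le hx.1).trans (hp_mem x hx).1

lemma pstar_zero (hc0 : c 0 = 0) (hp_mem : ∀ s ∈ Icc (0 : ℝ) 1, deriv c 0 * s ≤ p s ∧ p s ≤ c s) :
    p 0 = 0 :=
  le_antisymm (by simpa [hc0] using (hp_mem 0 ⟨le_rfl, zero_le_one⟩).2)
    (by simpa using (hp_mem 0 ⟨le_rfl, zero_le_one⟩).1)

lemma exists_gridVal_succ_le (hh : 0 < h) (hδ : 1 ≤ δ) (hg : ∀ k, 1 ≤ k → 0 ≤ g k)
    (hc : ∀ x ∈ Icc (0 : ℝ) 1, 0 ≤ c x) {j k : ℕ} {t : ℝ} (hj : (j + 1) * h ≤ 1) (hk : 1 ≤ k)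
    (ht : 0 ≤ t) (htj : t ≤ (j + 1) * h) :
    ∃ x ∈ Icc 0 (j * h), |x - t / k| ≤ h ∧ gridVal c g δ h (j + 1) ≤
      c ((j + 1) * h - t) + c h + g k + δ * k * interp h (gridVal c g δ h) x := by
  have hk1 : (1 : ℝ) ≤ k := by exact_mod_cast hk
  have hh1 : h ≤ 1 := by nlinarith [(j.cast_nonneg : (0 : ℝ) ≤ j)]
  rcases le_total t (j * h) with htj' | htj'
  · refine ⟨t / k, ⟨by positivity, (div_le_self ht hk1).trans htj'⟩, by simp [hh.le], ?_⟩
    linarith [gridVal_succ_le hh hδ hg hc hj hk ht htj', hc h ⟨hh.le, hh1⟩]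
  · refine ⟨j * h / k, ⟨by positivity, div_le_self (by positivity) hk1⟩, ?_, ?_⟩
    · rw [← sub_div, abs_div, abs_of_pos (by positivity : (0 : ℝ) < k),
        div_le_iff₀ (by positivity), abs_le]
      constructor <;> nlinarith
    · have := gridVal_succ_le hh hδ hg hc hj hk (by positivity) le_rfl
      rw [show ((j : ℝ) + 1) * h - j * h = h by ring] at this
      linarith [hc ((j + 1) * h - t) ⟨by linarith, by linarith⟩]

lemma interp_gridVal_le (hh : 0 < h) (hδ : 0 < δ) (hconv : ConvexOn ℝ (Icc 0 1) c)
    (hc0 : c 0 = 0) (hc'0 : 0 < deriv c 0) (hp : ∀ x ∈ Icc (0 : ℝ) 1, 0 ≤ p x) {ω S : ℝ}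
    (hω : ∀ x ∈ Icc (0 : ℝ) 1, ∀ y ∈ Icc (0 : ℝ) 1, |x - y| ≤ h → |p x - p y| ≤ ω)
    (hS : 0 ≤ S) {m j : ℕ}
    (IH : ∀ i : ℕ, i * h ≤ 1 →
      gridVal c g δ h i - p (i * h) ≤ errEnvelope c δ m (p (i * h) + S) + S)
    (hj : (j + 1) * h ≤ 1) {x y : ℝ} (hx : x ∈ Icc 0 (j * h)) (hy : y ∈ Icc (0 : ℝ) 1)
    (hxy : |x - y| ≤ h) :
    interp h (gridVal c g δ h) x ≤ p y + (2 * ω + S) + errEnvelope c δ m (p y + 2 * ω + S) := by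
  have hx1 : x ∈ Icc (0 : ℝ) 1 := ⟨hx.1, hx.2.trans (by linarith)⟩
  obtain ⟨i, hi, hxi, hIi⟩ := exists_interp_le (v := gridVal c g δ h) hh hx.1
    (hx.2.trans (by linarith))
  have hih : (i : ℝ) * h ∈ Icc (0 : ℝ) 1 :=
    ⟨by positivity, (mul_le_mul_of_nonneg_right (by exact_mod_cast hi) hh.le).trans hj⟩
  have h1 := abs_le.1 (hω _ hih _ hx1 (by rwa [abs_sub_comm]))
  have h2 := abs_le.1 (hω _ hx1 _ hy hxy)
  have hE := errEnvelope_mono hconv hc0 hc'0 hδ m (by linarith [hp _ hih] : 0 ≤ p (i * h) + S)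
    (by linarith : p (i * h) + S ≤ p y + 2 * ω + S)
  linarith [IH i hih.2]

lemma le_interp_gridVal (hh : 0 < h) (hδ : 1 ≤ δ) (hconv : ConvexOn ℝ (Icc 0 1) c)
    (hc0 : c 0 = 0) (hc'0 : 0 < deriv c 0) (hg : ∀ k, 1 ≤ k → 0 ≤ g k) {ω S : ℝ}
    (hω : ∀ x ∈ Icc (0 : ℝ) 1, ∀ y ∈ Icc (0 : ℝ) 1, |x - y| ≤ h → |p x - p y| ≤ ω)
    (hS : 0 ≤ S) {m j : ℕ}
    (IH : ∀ i : ℕ, i * h ≤ 1 →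
      p (i * h) - gridVal c g δ h i ≤ errEnvelope c δ m (gridVal c g δ h i + S) + S)
    (hj : (j + 1) * h ≤ 1) {x : ℝ} (hx : x ∈ Icc 0 (j * h)) :
    p x ≤ interp h (gridVal c g δ h) x + (ω + S) +
      errEnvelope c δ m (interp h (gridVal c g δ h) x + S) := by
  have hx1 : x ∈ Icc (0 : ℝ) 1 := ⟨hx.1, hx.2.trans (by linarith)⟩
  obtain ⟨i, hi, hxi, hIi⟩ := exists_le_interp (v := gridVal c g δ h) hh hx.1
    (hx.2.trans (by linarith))
  have hih : (i : ℝ) * h ∈ Icc (0 : ℝ) 1 :=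
    ⟨by positivity, (mul_le_mul_of_nonneg_right (by exact_mod_cast hi) hh.le).trans hj⟩
  have hPi := gridVal_nonneg hh hδ hg (nonneg_of_convexOn_of_deriv_pos hconv hc0 hc'0) i hih.2
  have h1 := abs_le.1 (hω _ hx1 _ hih hxi)
  have hE := errEnvelope_mono hconv hc0 hc'0 (by positivity : 0 < δ) m
    (by linarith : 0 ≤ gridVal c g δ h i + S)
    (by linarith : gridVal c g δ h i + S ≤ interp h (gridVal c g δ h) x + S)
  linarith [IH i hih.2]

lemma gridVal_succ_sub_le (hh : 0 < h) (hδ : 1 ≤ δ) (hconv : ConvexOn ℝ (Icc 0 1) c)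
    (hc0 : c 0 = 0) (hc'0 : 0 < deriv c 0) (hg : ∀ k, 1 ≤ k → 0 ≤ g k) (hg1 : g 1 = 0)
    (hp_mem : ∀ s ∈ Icc (0 : ℝ) 1, deriv c 0 * s ≤ p s ∧ p s ≤ c s)
    (hp_fix : ∀ s ∈ Icc (0 : ℝ) 1, Tmap c g δ p s = p s) {ω ν S S' : ℝ} {K₀ m j : ℕ}
    (hω : ∀ x ∈ Icc (0 : ℝ) 1, ∀ y ∈ Icc (0 : ℝ) 1, |x - y| ≤ h → |p x - p y| ≤ ω)
    (hK₀ : ∀ k, g k < c 1 + 2 → k ≤ K₀) (hν : 0 < ν) (hν1 : ν ≤ 1) (hS : 0 ≤ S)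
    (hS' : ν + c h + δ * K₀ * (2 * ω + S) ≤ S')
    (IH : ∀ i : ℕ, i * h ≤ 1 →
      gridVal c g δ h i - p (i * h) ≤ errEnvelope c δ m (p (i * h) + S) + S)
    (hj : (j + 1) * h ≤ 1) :
    gridVal c g δ h (j + 1) - p ((j + 1) * h) ≤
      errEnvelope c δ (m + 1) (p ((j + 1) * h) + S') + S' := by
  have hc_nn := nonneg_of_convexOn_of_deriv_pos hconv hc0 hc'0
  have hp_nn := pstar_nonneg hc'0 hp_mem
  have hω0 : 0 ≤ ω := (abs_nonneg _).trans (hω 0 ⟨le_rfl, zero_le_one⟩ 0 ⟨le_rfl, zero_le_one⟩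
    (by simp [hh.le]))
  set s := ((j : ℝ) + 1) * h
  have hs : s ∈ Icc (0 : ℝ) 1 := ⟨by positivity, hj⟩
  have hps : p s ≤ c 1 := (hp_mem s hs).2.trans
    (monotoneOn_of_convexOn_of_deriv_pos hconv hc0 hc'0 hs ⟨zero_le_one, le_rfl⟩ hs.2)
  -- a near-optimal split for `p s`, moved onto the grid by `exists_gridVal_succ_le`
  obtain ⟨k, t, hk, hkK, ht, hts, hlt⟩ := exists_mem_candidates_lt hs.1 le_rfl
    (zero_le_one.trans hδ) (fun x hx => hc_nn x ⟨hx.1, hx.2.trans hs.2⟩)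
    (fun x hx => hp_nn x ⟨hx.1, hx.2.trans hs.2⟩) hK₀
    (by rw [← Tmap_eq_sInf_candidates, hp_fix s hs]) hν (by linarith)
  have hk1 : (1 : ℝ) ≤ k := by exact_mod_cast hk
  have htk : t / k ∈ Icc (0 : ℝ) 1 := ⟨by positivity, (div_le_self ht hk1).trans (hts.trans hj)⟩
  have hcst := hc_nn _ ⟨sub_nonneg.2 hts, by linarith [hs.2]⟩
  have hgk := hg k hk
  obtain ⟨x, hx, hxt, hP⟩ := exists_gridVal_succ_le hh hδ hg hc_nn hj hk ht hts
  have hI := mul_le_mul_of_nonneg_left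
    (interp_gridVal_le hh (by positivity) hconv hc0 hc'0 hp_nn hω hS IH hj hx htk hxt)
    (by positivity : 0 ≤ δ * k)
  have hK := mul_le_mul_of_nonneg_right (mul_le_mul_of_nonneg_left hkK (by positivity : 0 ≤ δ))
    (by positivity : 0 ≤ 2 * ω + S)
  have hch := hc_nn h ⟨hh.le, by nlinarith [(j.cast_nonneg : (0 : ℝ) ≤ j)]⟩
  have hK0 : 0 ≤ δ * K₀ * (2 * ω + S) := by positivity
  set q := p (t / k) + 2 * ω + S
  refine sub_le_errEnvelope_succ hconv hc0 hc'0 hδ hk1 (q := q) (by linarith [hp_nn _ htk])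
    (by linarith) ?_ ?_ hs ?_
  · linarith [show δ * k * q = δ * k * p (t / k) + δ * k * (2 * ω + S) by ring,
      mul_nonneg (by positivity : 0 ≤ δ * k) (hp_nn _ htk)]
  · linarith [mul_add (δ * k) (p (t / k) + (2 * ω + S)) (errEnvelope c δ m q)]
  · have := gridVal_le hh hδ hg hg1 hc_nn (j + 1) (by push_cast; exact hj)
    push_cast at this
    simp only [tangentGap]
    linarith [(hp_mem s hs).1]

lemma pstar_sub_gridVal_succ_le (hh : 0 < h) (hδ : 1 ≤ δ) (hconv : ConvexOn ℝ (Icc 0 1) c)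
    (hc0 : c 0 = 0) (hc'0 : 0 < deriv c 0) (hg : ∀ k, 1 ≤ k → 0 ≤ g k) (hg1 : g 1 = 0)
    (hp_mem : ∀ s ∈ Icc (0 : ℝ) 1, deriv c 0 * s ≤ p s ∧ p s ≤ c s)
    (hp_fix : ∀ s ∈ Icc (0 : ℝ) 1, Tmap c g δ p s = p s) {ω ν S S' : ℝ} {K₀ m j : ℕ}
    (hω : ∀ x ∈ Icc (0 : ℝ) 1, ∀ y ∈ Icc (0 : ℝ) 1, |x - y| ≤ h → |p x - p y| ≤ ω)
    (hK₀ : ∀ k, g k < c 1 + 2 → k ≤ K₀) (hν : 0 < ν) (hν1 : ν ≤ 1) (hS : 0 ≤ S)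
    (hS' : ν + δ * K₀ * (ω + S) ≤ S')
    (IH : ∀ i : ℕ, i * h ≤ 1 →
      p (i * h) - gridVal c g δ h i ≤ errEnvelope c δ m (gridVal c g δ h i + S) + S)
    (hj : (j + 1) * h ≤ 1) :
    p ((j + 1) * h) - gridVal c g δ h (j + 1) ≤
      errEnvelope c δ (m + 1) (gridVal c g δ h (j + 1) + S') + S' := by
  have hc_nn := nonneg_of_convexOn_of_deriv_pos hconv hc0 hc'0
  have hω0 : 0 ≤ ω := (abs_nonneg _).trans (hω 0 ⟨le_rfl, zero_le_one⟩ 0 ⟨le_rfl, zero_le_one⟩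
    (by simp [hh.le]))
  set s := ((j : ℝ) + 1) * h
  have hs : s ∈ Icc (0 : ℝ) 1 := ⟨by positivity, hj⟩
  have hPs := gridVal_le hh hδ hg hg1 hc_nn (j + 1) (by push_cast; exact hj)
  push_cast at hPs
  have hcs := monotoneOn_of_convexOn_of_deriv_pos hconv hc0 hc'0 hs ⟨zero_le_one, le_rfl⟩ hs.2
  have hI_nn : ∀ x ∈ Icc 0 (j * h), 0 ≤ interp h (gridVal c g δ h) x := fun x hx =>
    interp_gridVal_nonneg hh hδ hg hc_nn (by linarith) hx.1 hx.2
  -- a near-optimal split for the grid value, which is admissible for `Tmap` as well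
  obtain ⟨k, t, hk, hkK, ht, htj, hlt⟩ := exists_mem_candidates_lt (T := j * h) (by positivity)
    (by linarith) (zero_le_one.trans hδ) (fun x hx => hc_nn x ⟨hx.1, hx.2.trans hs.2⟩)
    hI_nn hK₀ (gridVal_succ hh j).symm.le hν (by linarith)
  have hk1 : (1 : ℝ) ≤ k := by exact_mod_cast hk
  have hx : t / k ∈ Icc 0 (j * h) := ⟨by positivity, (div_le_self ht hk1).trans htj⟩
  set I := interp h (gridVal c g δ h) (t / k)
  have hI : 0 ≤ I := hI_nn _ hx
  have hcst := hc_nn (s - t) ⟨by linarith, by linarith [hs.2]⟩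
  have hgk := hg k hk
  have hps := le_of_Tmap_eq hδ hg hc_nn (pstar_nonneg hc'0 hp_mem) hs (hp_fix s hs) hk ht
    (by linarith)
  have hpx := mul_le_mul_of_nonneg_left (le_interp_gridVal hh hδ hconv hc0 hc'0 hg hω hS IH hj hx)
    (by positivity : 0 ≤ δ * k)
  have hK := mul_le_mul_of_nonneg_right (mul_le_mul_of_nonneg_left hkK (by positivity : 0 ≤ δ))
    (by positivity : 0 ≤ ω + S)
  have hK0 : 0 ≤ δ * K₀ * (ω + S) := by positivity
  have hSω := mul_le_mul_of_nonneg_left (by linarith : S ≤ ω + S) (by positivity : 0 ≤ δ * k)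
  refine sub_le_errEnvelope_succ hconv hc0 hc'0 hδ hk1 (q := I + S) (by positivity)
    (by linarith) ?_ ?_ hs ?_
  · linarith [mul_add (δ * k) I S, mul_nonneg (by positivity : 0 ≤ δ * k) hI]
  · linarith [show δ * k * (I + (ω + S) + errEnvelope c δ m (I + S)) =
      δ * k * I + δ * k * (ω + S) + δ * k * errEnvelope c δ m (I + S) by ring]
  · have := mul_le_gridVal (δ := δ) hh hc'0.le hδ hg (fun x hx =>
      mul_le_of_convexOn_of_differentiableAt hconv hc0 (differentiableAt_of_deriv_ne_zero
        hc'0.ne') hx) (j + 1) (by push_cast; exact hj)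
    push_cast at this
    simp only [tangentGap]
    linarith [(hp_mem s hs).2]

lemma gridVal_sub_pstar_le (hh : 0 < h) (hδ : 1 ≤ δ) (hconv : ConvexOn ℝ (Icc 0 1) c)
    (hc0 : c 0 = 0) (hc'0 : 0 < deriv c 0) (hg : ∀ k, 1 ≤ k → 0 ≤ g k) (hg1 : g 1 = 0)
    (hp_mem : ∀ s ∈ Icc (0 : ℝ) 1, deriv c 0 * s ≤ p s ∧ p s ≤ c s)
    (hp_fix : ∀ s ∈ Icc (0 : ℝ) 1, Tmap c g δ p s = p s) {ω ν : ℝ} {K₀ : ℕ} {S : ℕ → ℝ}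
    (hω : ∀ x ∈ Icc (0 : ℝ) 1, ∀ y ∈ Icc (0 : ℝ) 1, |x - y| ≤ h → |p x - p y| ≤ ω)
    (hK₀ : ∀ k, g k < c 1 + 2 → k ≤ K₀) (hν : 0 < ν) (hν1 : ν ≤ 1) (hS_nn : ∀ m, 0 ≤ S m)
    (hS : ∀ m, ν + c h + δ * K₀ * (2 * ω + S m) ≤ S (m + 1)) (m : ℕ) {j : ℕ} (hj : j * h ≤ 1) :
    gridVal c g δ h j - p (j * h) ≤ errEnvelope c δ m (p (j * h) + S m) + S m := by
  induction m generalizing j with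
  | zero =>
    have hj0 : (0 : ℝ) ≤ j * h := by positivity
    have hP := gridVal_le hh hδ hg hg1 (nonneg_of_convexOn_of_deriv_pos hconv hc0 hc'0) j hj
    have hp := hp_mem (j * h) ⟨hj0, hj⟩
    have := tangentGap_le_errEnvelope hconv hc0 hc'0 hδ (m := 0) (V := p (j * h) + S 0) hj0
      (le_min (by rw [pow_zero, one_mul, le_div_iff₀ hc'0]; linarith [hS_nn 0, hp.1]) hj)
    simp only [tangentGap] at this
    linarith [hS_nn 0]
  | succ m ih =>
    cases j with
    | zero =>
      simpa [gridVal_zero, pstar_zero hc0 hp_mem] using add_nonneg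
        (errEnvelope_nonneg hconv hc0 hc'0 (by positivity) (m + 1) (hS_nn (m + 1))) (hS_nn (m + 1))
    | succ j =>
      push_cast at hj ⊢
      exact gridVal_succ_sub_le hh hδ hconv hc0 hc'0 hg hg1 hp_mem hp_fix hω hK₀ hν hν1
        (hS_nn m) (hS m) (fun i hi => ih hi) hj

lemma pstar_sub_gridVal_le (hh : 0 < h) (hδ : 1 ≤ δ) (hconv : ConvexOn ℝ (Icc 0 1) c)
    (hc0 : c 0 = 0) (hc'0 : 0 < deriv c 0) (hg : ∀ k, 1 ≤ k → 0 ≤ g k) (hg1 : g 1 = 0)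
    (hp_mem : ∀ s ∈ Icc (0 : ℝ) 1, deriv c 0 * s ≤ p s ∧ p s ≤ c s)
    (hp_fix : ∀ s ∈ Icc (0 : ℝ) 1, Tmap c g δ p s = p s) {ω ν : ℝ} {K₀ : ℕ} {S : ℕ → ℝ}
    (hω : ∀ x ∈ Icc (0 : ℝ) 1, ∀ y ∈ Icc (0 : ℝ) 1, |x - y| ≤ h → |p x - p y| ≤ ω)
    (hK₀ : ∀ k, g k < c 1 + 2 → k ≤ K₀) (hν : 0 < ν) (hν1 : ν ≤ 1) (hS_nn : ∀ m, 0 ≤ S m)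
    (hS : ∀ m, ν + δ * K₀ * (ω + S m) ≤ S (m + 1)) (m : ℕ) {j : ℕ} (hj : j * h ≤ 1) :
    p (j * h) - gridVal c g δ h j ≤ errEnvelope c δ m (gridVal c g δ h j + S m) + S m := by
  induction m generalizing j with
  | zero =>
    have hj0 : (0 : ℝ) ≤ j * h := by positivity
    have hP := mul_le_gridVal hh hc'0.le hδ hg (fun x hx =>
      mul_le_of_convexOn_of_differentiableAt hconv hc0 (differentiableAt_of_deriv_ne_zero
        hc'0.ne') hx) j hj
    have hp := hp_mem (j * h) ⟨hj0, hj⟩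
    have := tangentGap_le_errEnvelope hconv hc0 hc'0 hδ (m := 0)
      (V := gridVal c g δ h j + S 0) hj0
      (le_min (by rw [pow_zero, one_mul, le_div_iff₀ hc'0]; linarith [hS_nn 0]) hj)
    simp only [tangentGap] at this
    linarith [hS_nn 0]
  | succ m ih =>
    cases j with
    | zero =>
      simpa [gridVal_zero, pstar_zero hc0 hp_mem] using add_nonneg
        (errEnvelope_nonneg hconv hc0 hc'0 (by positivity) (m + 1) (hS_nn (m + 1))) (hS_nn (m + 1))
    | succ j =>
      push_cast at hj ⊢
      exact pstar_sub_gridVal_succ_le hh hδ hconv hc0 hc'0 hg hg1 hp_mem hp_fix hω hK₀ hν hν1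
        (hS_nn m) (hS m) (fun i hi => ih hi) hj

lemma abs_gridVal_sub_pstar_le (hh : 0 < h) (hδ : 1 ≤ δ) (hconv : ConvexOn ℝ (Icc 0 1) c)
    (hc0 : c 0 = 0) (hc'0 : 0 < deriv c 0) (hg : ∀ k, 1 ≤ k → 0 ≤ g k) (hg1 : g 1 = 0)
    (hp_mem : ∀ s ∈ Icc (0 : ℝ) 1, deriv c 0 * s ≤ p s ∧ p s ≤ c s)
    (hp_fix : ∀ s ∈ Icc (0 : ℝ) 1, Tmap c g δ p s = p s) {ρ ε : ℝ} {K₀ m : ℕ}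
    (hω : ∀ x ∈ Icc (0 : ℝ) 1, ∀ y ∈ Icc (0 : ℝ) 1, |x - y| ≤ h → |p x - p y| ≤ ρ)
    (hch : c h ≤ ρ) (hK₀ : ∀ k, g k < c 1 + 2 → k ≤ K₀) (hK₀1 : 1 ≤ K₀) (hρ : 0 < ρ)
    (hρε : 4 * ρ * (2 * δ * K₀) ^ m ≤ min (ε / 2) 1)
    (hm : ∀ V ∈ Icc 0 (c 1 + 1), errEnvelope c δ m V ≤ ε / 2) {j : ℕ} (hj : j * h ≤ 1) :
    |gridVal c g δ h j - p (j * h)| ≤ ε := by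
  have hD : 1 ≤ δ * K₀ := one_le_mul_of_one_le_of_one_le hδ (by exact_mod_cast hK₀1)
  set S : ℕ → ℝ := fun n => 4 * ρ * (2 * δ * K₀) ^ n
  have hS_nn : ∀ n, 0 ≤ S n := fun n => by positivity
  -- the slack grows by the factor `2 δ K₀` per round, which absorbs the new slack `≤ 2ρ + 2 δ K₀ ρ`
  have hS : ∀ n, 2 * ρ + δ * K₀ * (2 * ρ + S n) ≤ S (n + 1) := fun n => by
    have hDn : 1 ≤ (2 * δ * K₀) ^ n := one_le_pow₀ (by linarith)
    have e : S (n + 1) = 2 * (δ * K₀) * S n := by simp only [S, pow_succ]; ring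
    rw [e]
    nlinarith [mul_le_mul_of_nonneg_left hDn (by positivity : 0 ≤ 4 * ρ * (δ * K₀))]
  have hρ1 : ρ ≤ 1 := by
    nlinarith [one_le_pow₀ (by linarith : (1 : ℝ) ≤ 2 * δ * K₀) (n := m), min_le_right (ε / 2) 1]
  have hup := gridVal_sub_pstar_le hh hδ hconv hc0 hc'0 hg hg1 hp_mem hp_fix hω hK₀ hρ hρ1
    hS_nn (fun n => (hS n).trans' (by linarith)) m hj
  have hlo := pstar_sub_gridVal_le hh hδ hconv hc0 hc'0 hg hg1 hp_mem hp_fix hω hK₀ hρ hρ1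
    hS_nn (fun n => (hS n).trans' (by nlinarith)) m hj
  have hj0 : (0 : ℝ) ≤ j * h := by positivity
  have hp := hp_mem (j * h) ⟨hj0, hj⟩
  have hcj := monotoneOn_of_convexOn_of_deriv_pos hconv hc0 hc'0 ⟨hj0, hj⟩ ⟨zero_le_one, le_rfl⟩ hj
  have hP := gridVal_le hh hδ hg hg1 (nonneg_of_convexOn_of_deriv_pos hconv hc0 hc'0) j hj
  have hP0 := gridVal_nonneg hh hδ hg (nonneg_of_convexOn_of_deriv_pos hconv hc0 hc'0) j hj
  have hSε : S m ≤ ε / 2 := hρε.trans (min_le_left _ _)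
  have hS1 : S m ≤ 1 := hρε.trans (min_le_right _ _)
  have h1 := hm (p (j * h) + S m) ⟨by nlinarith [hS_nn m], by linarith⟩
  have h2 := hm (gridVal c g δ h j + S m) ⟨by linarith [hS_nn m], by linarith⟩
  rw [abs_le]
  constructor <;> linarith

lemma exists_abs_gridVal_sub_pstar_le (hδ : 1 < δ) (hconv : ConvexOn ℝ (Icc 0 1) c)
    (hc0 : c 0 = 0) (hc'0 : 0 < deriv c 0) (hg : ∀ k, 1 ≤ k → 0 ≤ g k) (hg1 : g 1 = 0)
    (hg_top : Tendsto g atTop atTop) (hp_cont : ContinuousOn p (Icc 0 1))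
    (hp_mem : ∀ s ∈ Icc (0 : ℝ) 1, deriv c 0 * s ≤ p s ∧ p s ≤ c s)
    (hp_fix : ∀ s ∈ Icc (0 : ℝ) 1, Tmap c g δ p s = p s) {ε : ℝ} (hε : 0 < ε) :
    ∃ η > 0, ∀ h : ℝ, 0 < h → h ≤ η → ∀ j : ℕ, j * h ≤ 1 →
      |gridVal c g δ h j - p (j * h)| ≤ ε := by
  have hc1 := nonneg_of_convexOn_of_deriv_pos hconv hc0 hc'0 1 ⟨zero_le_one, le_rfl⟩
  obtain ⟨K, hK⟩ := eventually_atTop.1 (hg_top.eventually_ge_atTop (c 1 + 2))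
  have hK₀ : ∀ k, g k < c 1 + 2 → k ≤ K + 1 := fun k hk => by
    by_contra! hlt
    linarith [hK k (by omega)]
  obtain ⟨m, hm⟩ := exists_errEnvelope_le hc0 hc'0 hδ (C := c 1 + 1) (by linarith) (half_pos hε)
  set ρ := min (ε / 2) 1 / (4 * (2 * δ * (K + 1 : ℕ)) ^ m)
  have hρ : 0 < ρ := by positivity
  have hρε : 4 * ρ * (2 * δ * (K + 1 : ℕ)) ^ m = min (ε / 2) 1 := by
    have : (2 * δ * (K + 1 : ℕ) : ℝ) ^ m ≠ 0 := by positivity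
    simp only [ρ]
    field_simp
  obtain ⟨η₁, hη₁, hunif⟩ := Metric.uniformContinuousOn_iff_le.1
    (isCompact_Icc.uniformContinuousOn_of_continuous hp_cont) ρ hρ
  obtain ⟨η₂, hη₂, hcη⟩ := Metric.continuousAt_iff.1
    (differentiableAt_of_deriv_ne_zero hc'0.ne').continuousAt ρ hρ
  refine ⟨min η₁ (η₂ / 2), by positivity, fun h hh hη j hj => ?_⟩
  have hch : c h ≤ ρ := by
    have := hcη (x := h) (by
      rw [Real.dist_eq, sub_zero, abs_of_pos hh]; linarith [min_le_right η₁ (η₂ / 2)])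
    rw [Real.dist_eq, hc0, sub_zero] at this
    exact (le_abs_self _).trans this.le
  exact abs_gridVal_sub_pstar_le hh hδ.le hconv hc0 hc'0 hg hg1 hp_mem hp_fix
    (fun x hx y hy hxy => hunif x hx y hy (hxy.trans (hη.trans (min_le_left _ _)))) hch hK₀
    (by omega) hρ hρε.le hm hj

end ErrorBounds

theorem algP_converges_to_pstar_general (c : ℝ → ℝ) (g : ℕ → ℝ) (δ : ℝ)
    (hc_conv : StrictConvexOn ℝ (Set.Icc 0 1) c)
    (hc0 : c 0 = 0) (hc'0 : 0 < deriv c 0)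
    (hg1 : g 1 = 0) (hg_nonneg : ∀ k : ℕ, 1 ≤ k → 0 ≤ g k)
    (hg_top : Tendsto g atTop atTop)
    (hδ : 1 < δ)
    (pstar : ℝ → ℝ)
    (hp_cont : ContinuousOn pstar (Set.Icc 0 1))
    (hp_mem : ∀ s ∈ Set.Icc (0 : ℝ) 1, deriv c 0 * s ≤ pstar s ∧ pstar s ≤ c s)
    (hp_fix : ∀ s ∈ Set.Icc (0 : ℝ) 1, Tmap c g δ pstar s = pstar s) :
    TendstoUniformlyOn (fun n : ℕ => algP c g δ n) pstar atTop (Set.Icc 0 1) := by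
  rw [Metric.tendstoUniformlyOn_iff]
  intro ε hε
  obtain ⟨η, hη, hgrid⟩ := exists_abs_gridVal_sub_pstar_le hδ hc_conv.convexOn hc0 hc'0
    hg_nonneg hg1 hg_top hp_cont hp_mem hp_fix (by positivity : 0 < ε / 3)
  obtain ⟨η', hη', hunif⟩ := Metric.uniformContinuousOn_iff_le.1
    (isCompact_Icc.uniformContinuousOn_of_continuous hp_cont) (ε / 3) (by positivity)
  filter_upwards [(tendsto_pow_atTop_nhds_zero_of_lt_one (by norm_num : (0 : ℝ) ≤ 1 / 2)
    (by norm_num)).eventually_le_const (lt_min hη hη')] with n hn x hx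
  obtain ⟨N, hN⟩ := Nat.exists_eq_add_one.2 (Nat.two_pow_pos n)
  have hNh : (N + 1 : ℝ) * (1 / 2) ^ n = 1 := by
    rw [← Nat.cast_add_one, ← hN]; push_cast; rw [← mul_pow]; norm_num
  have hmesh (i : ℕ) (hi : i ≤ N + 1) : (i : ℝ) * (1 / 2) ^ n ∈ Icc (0 : ℝ) 1 :=
    ⟨by positivity, (mul_le_mul_of_nonneg_right (show (i : ℝ) ≤ N + 1 by exact_mod_cast hi)
      (by positivity)).trans hNh.le⟩
  have herr := abs_interp_sub_le (v := gridVal c g δ ((1 / 2) ^ n)) (f := pstar) (N := N)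
    (by positivity) hx.1 (hNh.symm ▸ hx.2)
    (fun i hi => hgrid _ (by positivity) (hn.trans (min_le_left _ _)) i (hmesh i hi).2)
    (fun i hi hxi => hunif x hx _ (hmesh i hi) (hxi.trans (hn.trans (min_le_right _ _))))
  rw [dist_comm, Real.dist_eq]
  exact herr.trans_lt (by linarith)

theorem algP_converges_to_pstar (c : ℝ → ℝ) (g : ℕ → ℝ) (δ : ℝ)
(hc_diff : DifferentiableOn ℝ c (Set.Icc 0 1))
    (hc_mono : StrictMonoOn c (Set.Icc 0 1))
    (hc_conv : StrictConvexOn ℝ (Set.Icc 0 1) c)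
    (hc0 : c 0 = 0) (hc'0 : 0 < deriv c 0)
    (hg_mono : StrictMonoOn g {k : ℕ | 1 ≤ k})
    (hg1 : g 1 = 0) (hg_nonneg : ∀ k : ℕ, 1 ≤ k → 0 ≤ g k)
    (hg_top : Tendsto g atTop atTop)
    (hδ : 1 < δ)
    (pstar : ℝ → ℝ)
    (hp_cont : ContinuousOn pstar (Set.Icc 0 1))
    (hp_mem : ∀ s ∈ Set.Icc (0 : ℝ) 1, deriv c 0 * s ≤ pstar s ∧ pstar s ≤ c s)
    (hp_fix : ∀ s ∈ Set.Icc (0 : ℝ) 1, Tmap c g δ pstar s = pstar s) :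
    TendstoUniformlyOn (fun n : ℕ => algP c g δ n) pstar atTop (Set.Icc 0 1) :=
  algP_converges_to_pstar_general c g δ hc_conv hc0 hc'0 hg1 hg_nonneg hg_top hδ pstar hp_cont
    hp_mem hp_fix
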